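/- Every Gaussian state is convex-Gaussian: for any R ∈ SO(2m,ℝ) and any λ_1, …, λ_m ∈ [−1, 1], the matrix 2^{−m} ∏_{k=1}^m (I + i λ_k c̃_{2k−1} c̃_{2k}), where c̃_j = Σ_{i=1}^{2m} R_{ij} c_i, is a finite convex combination of pure Gaussian states. -/

import Mathlib

/-!
Each factor of the product interpolates between its two pure values:
`1 + iλB = ((1+λ)/2)(1 + iB) + ((1-λ)/2)(1 - iB)` with weights in `[0,1]` summing to `1`.
Expanding the (noncommutative) product over all sign choices `σ ∈ {±1}^m` writes the state as a
convex combination, with product weights `∏ₖ (1 + σₖλₖ)/2`, of the `2^m` pure Gaussian states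
with the same rotation `R` and `λ = σ`.
-/

open Matrix Kronecker Finset
open scoped ComplexOrder

noncomputable section

/-- A Majorana family: `2*m` Hermitian `2^m × 2^m` complex matrices squaring to the
identity and pairwise anticommuting. -/
structure MajoranaFamily (m : ℕ) where
  c : Fin (2*m) → Matrix (Fin (2^m)) (Fin (2^m)) ℂ
  herm : ∀ j, (c j).IsHermitian
  sq : ∀ j, c j * c j = 1
  anticomm : ∀ j k, j ≠ k → c j * c k = -(c k * c j)

abbrev Mat (m : ℕ) := Matrix (Fin (2^m)) (Fin (2^m)) ℂ
abbrev Mat2 (m : ℕ) := Matrix (Fin (2^m) × Fin (2^m)) (Fin (2^m) × Fin (2^m)) ℂ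
abbrev MatN (m n : ℕ) := Matrix (Fin n → Fin (2^m)) (Fin n → Fin (2^m)) ℂ

variable {m : ℕ}

/-- A state: a positive semidefinite matrix of trace `1`. -/
def IsState {ι : Type*} [Fintype ι] (ρ : Matrix ι ι ℂ) : Prop :=
  ρ.PosSemidef ∧ ρ.trace = 1

/-- The trace norm `‖X‖₁ = Tr √(XᴴX)`. -/
def traceNorm {ι : Type*} [Fintype ι] [DecidableEq ι] (X : Matrix ι ι ℂ) : ℝ :=
  (((Matrix.posSemidef_conjTranspose_mul_self X).1.eigenvectorUnitary.1 *
    diagonal (((↑) : ℝ → ℂ) ∘ (√·) ∘ (Matrix.posSemidef_conjTranspose_mul_self X).1.eigenvalues) *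
    (star (Matrix.posSemidef_conjTranspose_mul_self X).1.eigenvectorUnitary :
      Matrix ι ι ℂ)).trace).re

/-- The rotated Majorana operators `c̃_j = Σ_i R_{ij} c_i`. -/
def tilde (F : MajoranaFamily m) (R : Matrix (Fin (2*m)) (Fin (2*m)) ℝ)
    (j : Fin (2*m)) : Mat m :=
  ∑ i, (R i j : ℂ) • F.c i

/-- Standard-form Gaussian state `2^{-m} ∏_{k=1}^m (I + i λ_k c̃_{2k-1} c̃_{2k})`
(ordered product; the factors commute). -/
def gaussStd (F : MajoranaFamily m) (R : Matrix (Fin (2*m)) (Fin (2*m)) ℝ)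
    (lam : Fin m → ℝ) : Mat m :=
  ((2:ℂ)^m)⁻¹ • (List.ofFn (fun k : Fin m =>
    (1 : Mat m) + (Complex.I * (lam k : ℂ)) •
      (tilde F R ⟨2*k.val, by omega⟩ * tilde F R ⟨2*k.val+1, by omega⟩))).prod

/-- A pure Gaussian state: a standard-form Gaussian state with all `λ_k ∈ {-1,1}`,
for some `R ∈ SO(2m,ℝ)`. -/
def IsPureGaussian (F : MajoranaFamily m) (ρ : Mat m) : Prop :=
  ∃ (R : Matrix (Fin (2*m)) (Fin (2*m)) ℝ) (lam : Fin m → ℝ),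
    Rᵀ * R = 1 ∧ R.det = 1 ∧ (∀ k, lam k = 1 ∨ lam k = -1) ∧ ρ = gaussStd F R lam

/-- A convex-Gaussian state: a finite convex combination of pure Gaussian states. -/
def IsConvexGaussian (F : MajoranaFamily m) (ρ : Mat m) : Prop :=
  ∃ (k : ℕ) (p : Fin k → ℝ) (g : Fin k → Mat m),
    (∀ i, 0 ≤ p i) ∧ (∑ i, p i) = 1 ∧ (∀ i, IsPureGaussian F (g i)) ∧
    ρ = ∑ i, p i • g i

/-- `Λ = Σ_j c_j ⊗ c_j` on `ℂ^N ⊗ ℂ^N`. -/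
def Lambda (F : MajoranaFamily m) : Mat2 m := ∑ j, F.c j ⊗ₖ F.c j

/-- Ordered product `c_{a_1} ⋯ c_{a_r}` over a finite set `S = {a_1 < … < a_r}`. -/
def majProd (F : MajoranaFamily m) (S : Finset (Fin (2*m))) : Mat m :=
  ((S.sort (· ≤ ·)).map F.c).prod

/-- An even operator: a complex linear combination of the identity and products of
an even number of distinct Majorana operators. -/
def IsEven (F : MajoranaFamily m) (X : Mat m) : Prop :=
  X ∈ Submodule.span ℂ {Y : Mat m | ∃ S : Finset (Fin (2*m)), Even S.card ∧ Y = majProd F S}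

/-- The Hermitian correlator `i^k c_{a_1} ⋯ c_{a_{2k}}` associated to a set of
cardinality `2k`. -/
def corrOp (F : MajoranaFamily m) (S : Finset (Fin (2*m))) : Mat m :=
  (Complex.I ^ (S.card / 2)) • majProd F S

/-- The operator acting as `A` on the `k`-th tensor factor of `(ℂ^N)^{⊗n}` and as the
identity on the other factors. -/
def embedAt (n : ℕ) (k : Fin n) (A : Mat m) : MatN m n :=
  fun x y => A (x k) (y k) * ∏ l ∈ Finset.univ.erase k, (if x l = y l then 1 else 0)

/-- `Λ^{k,l} = Σ_j c_j^{(k)} c_j^{(l)}` on `(ℂ^N)^{⊗n}`. -/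
def LambdaKL (F : MajoranaFamily m) (n : ℕ) (k l : Fin n) : MatN m n :=
  ∑ j, embedAt n k (F.c j) * embedAt n l (F.c j)

/-- Partial trace of an operator on `(ℂ^N)^{⊗n}` over the tensor factors `2, …, n`. -/
def ptrRest (n : ℕ) (hn : 1 ≤ n) (ρ : MatN m n) : Mat m := fun a b =>
  ∑ g : Fin (n-1) → Fin (2^m),
    ρ (fun i => if h : i.val = 0 then a else g ⟨i.val - 1, by omega⟩)
      (fun i => if h : i.val = 0 then b else g ⟨i.val - 1, by omega⟩)

/-- `ρ` has an `n`-Gaussian-symmetric extension. -/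
def HasGSExt (F : MajoranaFamily m) (n : ℕ) (hn : 1 ≤ n) (ρ : Mat m) : Prop :=
  ∃ ext : MatN m n, IsState ext ∧ ptrRest n hn ext = ρ ∧
    ∀ k l : Fin n, k ≠ l → LambdaKL F n k l * ext = 0

/-- `‖Λ‖₁ = 2(m+1) C(2m, m+1)`. -/
def lambdaNorm (m : ℕ) : ℝ := 2*(m+1) * (Nat.choose (2*m) (m+1) : ℝ)

/-- `ε(n) = min {2, 10 ‖Λ‖₁² 2^{2m} n^{-1/3}}`. -/
def epsB (m n : ℕ) : ℝ :=
  min 2 (10 * lambdaNorm m ^ 2 * 2^(2*m) / (n:ℝ) ^ ((1:ℝ)/3))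

/-- `χ(n) = (ε(n)/2) (2m)!/m!`. -/
def chiB (m n : ℕ) : ℝ :=
  epsB m n / 2 * ((Nat.factorial (2*m) : ℝ) / (Nat.factorial m : ℝ))

/-- `δ(n) = χ(n)/(1+χ(n))`. -/
def deltaB (m n : ℕ) : ℝ := chiB m n / (1 + chiB m n)

/-- The parity operator `P = i^m c_1 ⋯ c_{2m}`. -/
def parityOp (F : MajoranaFamily m) : Mat m :=
  (Complex.I ^ m) • (((List.finRange (2*m)).map F.c).prod)

/-- The operator `I^{⊗ r} ⊗ c_s ⊗ P^{⊗(n-r-1)}` on `(ℂ^N)^{⊗n}` (0-based position `r`). -/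
def dOp (F : MajoranaFamily m) (n : ℕ) (r : Fin n) (s : Fin (2*m)) : MatN m n :=
  fun x y => ∏ l : Fin n,
    if l < r then (if x l = y l then 1 else 0)
    else if l = r then F.c s (x l) (y l)
    else parityOp F (x l) (y l)

/-- The family `d_1, …, d_{2mn}`, where `d_{2m(r-1)+s} = I^{⊗(r-1)} ⊗ c_s ⊗ P^{⊗(n-r)}`. -/
def dAll (hm : 1 ≤ m) (F : MajoranaFamily m) (n : ℕ) (j : Fin (2*(m*n))) : MatN m n :=
  dOp F n
    ⟨j.val / (2*m), by
      have h1 := j.isLt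
      rw [Nat.div_lt_iff_lt_mul (by omega)]
      have h2 : n * (2*m) = 2*(m*n) := by ring
      omega⟩
    ⟨j.val % (2*m), Nat.mod_lt _ (by omega)⟩

/-- The index `2m(k-1)+j` (0-based: `2mk + j`) into a family of `2mn` Majorana operators. -/
def bigIdx (m n : ℕ) (k : Fin n) (j : Fin (2*m)) : Fin (2*(m*n)) :=
  ⟨2*m*k.val + j.val, by
    have hk : k.val + 1 ≤ n := k.isLt
    have hj := j.isLt
    have h1 : 2*m*(k.val+1) = 2*m*k.val + 2*m := by ring
    have h2 : 2*m*(k.val+1) ≤ 2*m*n := Nat.mul_le_mul le_rfl hk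
    have h3 : 2*m*n = 2*(m*n) := by ring
    omega⟩

/-- `Γ^{k,l} = Σ_{j=1}^{2m} (-1)^{m-j} e_{2m(k-1)+j} · e_{2m(l-1)+1} ⋯ ê_{2m(l-1)+j} ⋯ e_{2ml}`. -/
def GammaKL (m n : ℕ) (E : MajoranaFamily (m*n)) (k l : Fin n) :
    Matrix (Fin (2^(m*n))) (Fin (2^(m*n))) ℂ :=
  ∑ j : Fin (2*m), ((-1:ℂ) ^ ((m:ℤ) - (j.val+1 : ℤ))) •
    (E.c (bigIdx m n k j) *
      (((List.finRange (2*m)).filter (fun i => i ≠ j)).map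
        (fun i => E.c (bigIdx m n l i))).prod)

/-- `C = i^{mn} e_1 ⋯ e_{2mn}`. -/
def bigParity (m n : ℕ) (E : MajoranaFamily (m*n)) :
    Matrix (Fin (2^(m*n))) (Fin (2^(m*n))) ℂ :=
  (Complex.I ^ (m*n)) • (((List.finRange (2*(m*n))).map E.c).prod)

/-- The `n`-fold tensor power `A^{⊗n}` of a matrix on `ℂ^N`. -/
def tpow (n : ℕ) (A : Mat m) : MatN m n := fun x y => ∏ k, A (x k) (y k)

/-- Noncommutative form of `Fintype.prod_sum`. -/
theorem List.prod_ofFn_sum_smul {R A β : Type*} [CommSemiring R] [Semiring A] [Algebra R A]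
    [Fintype β] (n : ℕ) (w : Fin n → β → R) (G : Fin n → β → A) :
    (List.ofFn fun k => ∑ b, w k b • G k b).prod
      = ∑ σ : Fin n → β, (∏ k, w k (σ k)) • (List.ofFn fun k => G k (σ k)).prod := by
  induction n with
  | zero => simp
  | succ n ih =>
    have sum_cons : ∀ f : (Fin (n + 1) → β) → A,
        ∑ σ, f σ = ∑ b, ∑ τ : Fin n → β, f (Fin.cons b τ) := fun f =>
      ((Fintype.sum_equiv (Fin.consEquiv fun _ => β) _ _ fun _ => rfl).symm).trans
        (Fintype.sum_prod_type _)
    rw [List.ofFn_succ, List.prod_cons, ih (fun k => w k.succ) (fun k => G k.succ), sum_cons,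
      Finset.sum_mul]
    refine Finset.sum_congr rfl fun b _ => ?_
    simp only [Finset.mul_sum, smul_mul_smul_comm, Fin.prod_univ_succ, Fin.cons_zero,
      Fin.cons_succ, List.ofFn_succ, List.prod_cons]

def boolSign (b : Bool) : ℝ := if b then 1 else -1

theorem boolSign_eq_one_or_eq_neg_one (b : Bool) : boolSign b = 1 ∨ boolSign b = -1 := by
  cases b <;> simp [boolSign]

theorem sum_bool_one_add_boolSign_mul_div_two (t : ℝ) :
    ∑ b : Bool, (1 + boolSign b * t) / 2 = 1 := by
  simp [boolSign]
  ring

theorem one_add_boolSign_mul_div_two_nonneg {t : ℝ} (ht : -1 ≤ t ∧ t ≤ 1) (b : Bool) :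
    0 ≤ (1 + boolSign b * t) / 2 := by
  cases b <;> simp [boolSign] <;> linarith [ht.1, ht.2]

theorem one_add_smul_eq_sum_bool {A : Type*} [Ring A] [Algebra ℂ A] (t : ℝ) (B : A) :
    1 + (Complex.I * t) • B
      = ∑ b : Bool, (((1 + boolSign b * t) / 2 : ℝ) : ℂ) • (1 + (Complex.I * boolSign b) • B) := by
  simp only [Fintype.sum_bool, boolSign, if_true, Bool.false_eq_true, if_false]
  push_cast
  module

theorem isPureGaussian_gaussStd_boolSign (F : MajoranaFamily m)
    {R : Matrix (Fin (2 * m)) (Fin (2 * m)) ℝ} (hR : Rᵀ * R = 1) (hdet : R.det = 1)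
    (σ : Fin m → Bool) : IsPureGaussian F (gaussStd F R (boolSign ∘ σ)) :=
  ⟨R, boolSign ∘ σ, hR, hdet, fun k => boolSign_eq_one_or_eq_neg_one (σ k), rfl⟩

theorem gaussStd_eq_sum_boolSign (F : MajoranaFamily m) (R : Matrix (Fin (2 * m)) (Fin (2 * m)) ℝ)
    (lam : Fin m → ℝ) :
    gaussStd F R lam = ∑ σ : Fin m → Bool,
      (∏ k, (1 + boolSign (σ k) * lam k) / 2) • gaussStd F R (boolSign ∘ σ) := by
  unfold gaussStd
  simp_rw [one_add_smul_eq_sum_bool (lam _), List.prod_ofFn_sum_smul, Finset.smul_sum]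
  refine Finset.sum_congr rfl fun σ _ => ?_
  rw [← Complex.ofReal_prod, RCLike.real_smul_eq_coe_smul (K := ℂ), smul_comm]
  rfl

theorem isConvexGaussian_of_sum_fintype {ι : Type*} [Fintype ι] (F : MajoranaFamily m)
    (p : ι → ℝ) (g : ι → Mat m) (hp : ∀ i, 0 ≤ p i) (hp1 : ∑ i, p i = 1)
    (hg : ∀ i, IsPureGaussian F (g i)) : IsConvexGaussian F (∑ i, p i • g i) := by
  let e := Fintype.equivFin ι
  refine ⟨Fintype.card ι, p ∘ e.symm, g ∘ e.symm, fun i => hp _, ?_, fun i => hg _, ?_⟩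
  · rwa [← e.symm.sum_comp p] at hp1
  · exact (e.symm.sum_comp fun i => p i • g i).symm

theorem stmt_14_general (m : ℕ) (F : MajoranaFamily m)
    (R : Matrix (Fin (2*m)) (Fin (2*m)) ℝ) (hR : Rᵀ * R = 1) (hdet : R.det = 1)
    (lam : Fin m → ℝ) (hlam : ∀ k, -1 ≤ lam k ∧ lam k ≤ 1) :
    IsConvexGaussian F (gaussStd F R lam) := by
  rw [gaussStd_eq_sum_boolSign]
  refine isConvexGaussian_of_sum_fintype F _ _
    (fun σ => Finset.prod_nonneg fun k _ => one_add_boolSign_mul_div_two_nonneg (hlam k) (σ k))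
    ?_ (isPureGaussian_gaussStd_boolSign F hR hdet)
  rw [← Fintype.prod_sum (fun k b => (1 + boolSign b * lam k) / 2)]
  exact Finset.prod_eq_one fun k _ => sum_bool_one_add_boolSign_mul_div_two (lam k)

/-- Every Gaussian state in standard form (with `λ_k ∈ [-1,1]`) is convex-Gaussian. -/
theorem stmt_14 (m : ℕ) (hm : 1 ≤ m) (F : MajoranaFamily m)
    (R : Matrix (Fin (2*m)) (Fin (2*m)) ℝ) (hR : Rᵀ * R = 1) (hdet : R.det = 1)
    (lam : Fin m → ℝ) (hlam : ∀ k, -1 ≤ lam k ∧ lam k ≤ 1) :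
    IsConvexGaussian F (gaussStd F R lam) :=
  stmt_14_general m F R hR hdet lam hlam
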